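/- arXiv:1905.13665 — 5 statements merged into one kernel-verified Lean document; each statement's English description precedes it below -/
import Mathlib

section
/- Let M, C ≥ 0 and Δ ∈ (0, 1]. Let h : ℝ → ℝ be twice continuously differentiable with |h(y)|, |h'(y)|, |h''(y)| ≤ M for all y, and let u be the Δ-sliding average of h (so u is differentiable with u'(y) = (h(y+Δ/2) − h(y−Δ/2))/Δ). Let v : ℝ → ℝ be three times continuously differentiable with |v(y)|, |v'(y)|, |v''(y)|, |v'''(y)| ≤ M for all y. Fix y₀ ∈ ℝ and suppose û₊, û₋, ṽ₊, ṽ₋ ∈ ℝ satisfy |û₊ − h(y₀ + Δ/2)| ≤ C·Δ³, |û₋ − h(y₀ − Δ/2)| ≤ C·Δ³, |ṽ₊ − v(y₀ + Δ/2)| ≤ C·Δ³, and |ṽ₋ − v(y₀ − Δ/2)| ≤ C·Δ³. Then there is a constant K depending only on M and C (not on Δ, y₀, h, v) such that |(ṽ₊·û₊ − ṽ₋·û₋)/Δ − (u'(y₀)·v(y₀) + u(y₀)·v'(y₀))| ≤ K·Δ². -/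
/-!
Write `h±`, `v±` for the values at `y₀ ± Δ/2`. The reconstruction errors contribute
`(ṽ±û± − v±h±)/Δ = O(Δ³)/Δ`. For the exact values, splitting the products into means and
differences gives
`(v₊h₊ − v₋h₋)/Δ = (h₊ − h₋)/Δ · (v₊ + v₋)/2 + (h₊ + h₋)/2 · (v₊ − v₋)/Δ`,
and the centred means, the centred difference quotient and the sliding average (the centred
difference of an antiderivative) are second-order accurate at `y₀`. These symmetric Taylor
estimates all come from one comparison principle: `g 0 = 0` and `|g' t| ≤ K tⁿ` give
`|g δ| ≤ K δⁿ⁺¹/(n+1)`.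
-/

open intervalIntegral

theorem abs_le_of_abs_deriv_le_mul_pow {g g' : ℝ → ℝ} {K δ : ℝ} (n : ℕ) (hδ : 0 ≤ δ)
    (hg : ∀ t, HasDerivAt g (g' t) t) (hg0 : g 0 = 0) (hg' : ∀ t, 0 ≤ t → |g' t| ≤ K * t ^ n) :
    |g δ| ≤ K * δ ^ (n + 1) / (n + 1) := by
  have hB (t : ℝ) : HasDerivAt (fun t => K * t ^ (n + 1) / (n + 1)) (K * t ^ n) t := by
    refine (((hasDerivAt_pow (n + 1) t).const_mul K).div_const ((n : ℝ) + 1)).congr_deriv ?_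
    rw [Nat.add_sub_cancel]
    push_cast
    field_simp
  exact image_norm_le_of_norm_deriv_right_le_deriv_boundary
    (fun t _ => (hg t).continuousAt.continuousWithinAt) (fun t _ => (hg t).hasDerivWithinAt)
    (by simp [hg0]) hB (fun t ht => hg' t ht.1) ⟨hδ, le_rfl⟩

section SymmetricDifferences

variable {f f' f'' f''' : ℝ → ℝ} {M δ : ℝ}

theorem hasDerivAt_comp_add_sub_comp_sub (hf : ∀ y, HasDerivAt f (f' y) y) (x t : ℝ) :
    HasDerivAt (fun t => f (x + t) - f (x - t)) (f' (x + t) + f' (x - t)) t := by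
  simpa using ((hf (x + t)).comp_const_add x t).fun_sub ((hf (x - t)).comp_const_sub x t)

theorem hasDerivAt_comp_add_add_comp_sub (hf : ∀ y, HasDerivAt f (f' y) y) (x t : ℝ) :
    HasDerivAt (fun t => f (x + t) + f (x - t)) (f' (x + t) - f' (x - t)) t := by
  simpa [sub_eq_add_neg] using
    ((hf (x + t)).comp_const_add x t).fun_add ((hf (x - t)).comp_const_sub x t)

theorem abs_sub_le_of_hasDerivAt (hf : ∀ y, HasDerivAt f (f' y) y) (hb : ∀ y, |f' y| ≤ M)
    (x : ℝ) (hδ : 0 ≤ δ) : |f (x + δ) - f (x - δ)| ≤ 2 * M * δ := by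
  have := abs_le_of_abs_deriv_le_mul_pow (K := 2 * M) 0 hδ
    (hasDerivAt_comp_add_sub_comp_sub hf x) (by simp) fun t _ => by
      simpa [two_mul] using (abs_add_le _ _).trans (add_le_add (hb (x + t)) (hb (x - t)))
  simpa using this

theorem abs_add_sub_two_mul_le (hf : ∀ y, HasDerivAt f (f' y) y)
    (hf' : ∀ y, HasDerivAt f' (f'' y) y) (hb : ∀ y, |f'' y| ≤ M) (x : ℝ) (hδ : 0 ≤ δ) :
    |f (x + δ) + f (x - δ) - 2 * f x| ≤ M * δ ^ 2 := by
  have := abs_le_of_abs_deriv_le_mul_pow (K := 2 * M) 1 hδ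
    (fun t => (hasDerivAt_comp_add_add_comp_sub hf x t).sub_const (2 * f x))
    (by simp only [add_zero, sub_zero]; ring)
    fun t ht => by simpa using abs_sub_le_of_hasDerivAt hf' hb x ht
  norm_num at this
  linarith

theorem abs_sub_sub_two_mul_mul_le (hf : ∀ y, HasDerivAt f (f' y) y)
    (hf' : ∀ y, HasDerivAt f' (f'' y) y) (hf'' : ∀ y, HasDerivAt f'' (f''' y) y)
    (hb : ∀ y, |f''' y| ≤ M) (x : ℝ) (hδ : 0 ≤ δ) :
    |f (x + δ) - f (x - δ) - 2 * δ * f' x| ≤ M * δ ^ 3 / 3 := by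
  have hg (t : ℝ) : HasDerivAt (fun t => f (x + t) - f (x - t) - 2 * t * f' x)
      (f' (x + t) + f' (x - t) - 2 * f' x) t := by
    simpa using (hasDerivAt_comp_add_sub_comp_sub hf x t).fun_sub
      (((hasDerivAt_id' t).const_mul 2).mul_const (f' x))
  have := abs_le_of_abs_deriv_le_mul_pow 2 hδ hg (by simp)
    fun t ht => abs_add_sub_two_mul_le hf' hf'' hb x ht
  norm_num at this
  exact this

end SymmetricDifferences

theorem abs_integral_sub_two_mul_le {h h' h'' : ℝ → ℝ} {M δ : ℝ}
    (hh : ∀ y, HasDerivAt h (h' y) y) (hh' : ∀ y, HasDerivAt h' (h'' y) y)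
    (hb : ∀ y, |h'' y| ≤ M) (x : ℝ) (hδ : 0 ≤ δ) :
    |(∫ s in (x - δ)..(x + δ), h s) - 2 * δ * h x| ≤ M * δ ^ 3 / 3 := by
  have hc : Continuous h := continuous_iff_continuousAt.2 fun y => (hh y).continuousAt
  have hF (y : ℝ) : HasDerivAt (fun y => ∫ s in x..y, h s) (h y) y :=
    (hc.integral_hasStrictDerivAt x y).hasDerivAt
  have hI : (∫ s in x..(x + δ), h s) - ∫ s in x..(x - δ), h s = ∫ s in (x - δ)..(x + δ), h s :=
    integral_interval_sub_left (hc.intervalIntegrable _ _) (hc.intervalIntegrable _ _)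
  simpa only [hI] using abs_sub_sub_two_mul_mul_le hF hh hh' hb x hδ

theorem abs_mul_sub_mul_le {a b a' b' M ε : ℝ} (ha : |a| ≤ M) (hb : |b| ≤ M)
    (ha' : |a' - a| ≤ ε) (hb' : |b' - b| ≤ ε) : |a' * b' - a * b| ≤ ε * (2 * M + ε) := by
  have hb'M : |b'| ≤ M + ε := by simpa using (abs_add_le (b' - b) b).trans (by linarith)
  calc |a' * b' - a * b| = |(a' - a) * b' + a * (b' - b)| := by ring_nf
    _ ≤ |a' - a| * |b'| + |a| * |b' - b| := by
      simpa only [abs_mul] using abs_add_le ((a' - a) * b') (a * (b' - b))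
    _ ≤ ε * (M + ε) + M * ε := by
      gcongr
      · exact (abs_nonneg _).trans ha'
      · exact (abs_nonneg _).trans ha
    _ = ε * (2 * M + ε) := by ring

theorem ContDiff.hasDerivAt_iteratedDeriv {n : WithTop ℕ∞} {f : ℝ → ℝ} (hf : ContDiff ℝ n f)
    {k : ℕ} (hk : k < n) (y : ℝ) :
    HasDerivAt (iteratedDeriv k f) (iteratedDeriv (k + 1) f y) y := by
  rw [iteratedDeriv_succ]
  exact (hf.differentiable_iteratedDeriv k hk y).hasDerivAt

noncomputable def slidingAverage (Δ : ℝ) (h : ℝ → ℝ) (x : ℝ) : ℝ :=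
  (1 / Δ) * ∫ s in (x - Δ / 2)..(x + Δ / 2), h s

theorem abs_centered_product_difference_sub_le {h h' h'' v v' v'' v''' : ℝ → ℝ} {M Δ : ℝ}
    (hΔ : 0 < Δ) (hh : ∀ y, HasDerivAt h (h' y) y) (hh' : ∀ y, HasDerivAt h' (h'' y) y)
    (hv : ∀ y, HasDerivAt v (v' y) y) (hv' : ∀ y, HasDerivAt v' (v'' y) y)
    (hv'' : ∀ y, HasDerivAt v'' (v''' y) y)
    (hb : ∀ y, |h y| ≤ M) (hb' : ∀ y, |h' y| ≤ M) (hb'' : ∀ y, |h'' y| ≤ M)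
    (hvb' : ∀ y, |v' y| ≤ M) (hvb'' : ∀ y, |v'' y| ≤ M) (hvb''' : ∀ y, |v''' y| ≤ M) (x : ℝ) :
    |(v (x + Δ / 2) * h (x + Δ / 2) - v (x - Δ / 2) * h (x - Δ / 2)) / Δ -
        ((h (x + Δ / 2) - h (x - Δ / 2)) / Δ * v x + slidingAverage Δ h x * v' x)| ≤
      M ^ 2 / 3 * Δ ^ 2 := by
  obtain ⟨δ, hδ, rfl⟩ : ∃ δ, 0 < δ ∧ Δ = 2 * δ := ⟨Δ / 2, by positivity, by ring⟩
  have hhalf : 2 * δ / 2 = δ := by ring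
  simp only [slidingAverage, hhalf]
  have hM : 0 ≤ M := (abs_nonneg _).trans (hb x)
  have h_odd := abs_sub_le_of_hasDerivAt hh hb' x hδ.le
  have h_sum : |h (x + δ) + h (x - δ)| ≤ 2 * M :=
    (abs_add_le _ _).trans (by linarith [hb (x + δ), hb (x - δ)])
  have h_even := abs_add_sub_two_mul_le hh hh' hb'' x hδ.le
  have h_avg := abs_integral_sub_two_mul_le hh hh' hb'' x hδ.le
  have v_even := abs_add_sub_two_mul_le hv hv' hvb'' x hδ.le
  have v_odd := abs_sub_sub_two_mul_mul_le hv hv' hv'' hvb''' x hδ.le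
  have identity : (v (x + δ) * h (x + δ) - v (x - δ) * h (x - δ)) / (2 * δ) -
        ((h (x + δ) - h (x - δ)) / (2 * δ) * v x +
          1 / (2 * δ) * (∫ s in (x - δ)..(x + δ), h s) * v' x) =
      ((h (x + δ) - h (x - δ)) * (v (x + δ) + v (x - δ) - 2 * v x) +
        (h (x + δ) + h (x - δ)) * (v (x + δ) - v (x - δ) - 2 * δ * v' x) +
        2 * δ * (h (x + δ) + h (x - δ) - 2 * h x) * v' x -
        2 * ((∫ s in (x - δ)..(x + δ), h s) - 2 * δ * h x) * v' x) / (4 * δ) := by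
    field_simp
    ring
  have h4δ : 0 < 4 * δ := by positivity
  rw [identity, abs_div, abs_of_pos h4δ, div_le_iff₀ h4δ]
  calc _ ≤ |h (x + δ) - h (x - δ)| * |v (x + δ) + v (x - δ) - 2 * v x| +
        |h (x + δ) + h (x - δ)| * |v (x + δ) - v (x - δ) - 2 * δ * v' x| +
        2 * δ * |h (x + δ) + h (x - δ) - 2 * h x| * |v' x| +
        2 * |(∫ s in (x - δ)..(x + δ), h s) - 2 * δ * h x| * |v' x| := by
        refine (abs_sub _ _).trans (add_le_add ((abs_add_three _ _ _).trans ?_) ?_)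
        · simp only [abs_mul, abs_two, abs_of_pos hδ, le_refl]
        · simp only [abs_mul, abs_two, le_refl]
    _ ≤ 2 * M * δ * (M * δ ^ 2) + 2 * M * (M * δ ^ 3 / 3) + 2 * δ * (M * δ ^ 2) * M +
        2 * (M * δ ^ 3 / 3) * M := by
        gcongr <;> exact hvb' x
    _ = M ^ 2 / 3 * (2 * δ) ^ 2 * (4 * δ) := by ring

theorem staggered_weno_second_order_limit_general (M C : ℝ) :
    ∃ K : ℝ, ∀ (Δ : ℝ), 0 < Δ → Δ ≤ 1 →
      ∀ (h v : ℝ → ℝ), ContDiff ℝ 2 h →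
        (∀ y, |h y| ≤ M) → (∀ y, |deriv h y| ≤ M) → (∀ y, |iteratedDeriv 2 h y| ≤ M) →
        ContDiff ℝ 3 v →
        (∀ y, |v y| ≤ M) → (∀ y, |deriv v y| ≤ M) →
        (∀ y, |iteratedDeriv 2 v y| ≤ M) → (∀ y, |iteratedDeriv 3 v y| ≤ M) →
        ∀ (y₀ uhatP uhatM vtilP vtilM : ℝ),
          |uhatP - h (y₀ + Δ / 2)| ≤ C * Δ ^ 3 →
          |uhatM - h (y₀ - Δ / 2)| ≤ C * Δ ^ 3 →
          |vtilP - v (y₀ + Δ / 2)| ≤ C * Δ ^ 3 →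
          |vtilM - v (y₀ - Δ / 2)| ≤ C * Δ ^ 3 →
          |(vtilP * uhatP - vtilM * uhatM) / Δ -
              ((h (y₀ + Δ / 2) - h (y₀ - Δ / 2)) / Δ * v y₀ +
                ((1 / Δ) * ∫ s in (y₀ - Δ / 2)..(y₀ + Δ / 2), h s) * deriv v y₀)| ≤
            K * Δ ^ 2 := by
  refine ⟨2 * C * (2 * M + C) + M ^ 2 / 3, ?_⟩
  intro Δ hΔ hΔ1 h v hh hb hb' hb'' hv hvb hvb' hvb'' hvb''' y₀ uhatP uhatM vtilP vtilM
    huP huM hvP hvM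
  have hh0 := hh.hasDerivAt_iteratedDeriv (k := 0) (by norm_num)
  have hh1 := hh.hasDerivAt_iteratedDeriv (k := 1) (by norm_num)
  have hv0 := hv.hasDerivAt_iteratedDeriv (k := 0) (by norm_num)
  have hv1 := hv.hasDerivAt_iteratedDeriv (k := 1) (by norm_num)
  have hv2 := hv.hasDerivAt_iteratedDeriv (k := 2) (by norm_num)
  simp only [iteratedDeriv_zero, iteratedDeriv_one, Nat.reduceAdd] at hh0 hh1 hv0 hv1 hv2
  have flux := abs_centered_product_difference_sub_le hΔ hh0 hh1 hv0 hv1 hv2 hb hb' hb'' hvb'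
    hvb'' hvb''' y₀
  unfold slidingAverage at flux
  have reconstruction {a b a' b' : ℝ} (haM : |a| ≤ M) (hbM : |b| ≤ M)
      (ha' : |a' - a| ≤ C * Δ ^ 3) (hb' : |b' - b| ≤ C * Δ ^ 3) :
      |(a' * b' - a * b) / Δ| ≤ C * (2 * M + C) * Δ ^ 2 := by
    rw [abs_div, abs_of_pos hΔ, div_le_iff₀ hΔ]
    have hΔ3 : Δ ^ 3 ≤ 1 := pow_le_one₀ hΔ.le hΔ1
    calc |a' * b' - a * b| ≤ C * Δ ^ 3 * (2 * M + C * Δ ^ 3) := abs_mul_sub_mul_le haM hbM ha' hb'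
      _ = C * (2 * M + C) * Δ ^ 2 * Δ - C ^ 2 * Δ ^ 3 * (1 - Δ ^ 3) := by ring
      _ ≤ C * (2 * M + C) * Δ ^ 2 * Δ := sub_le_self _ (by have := sub_nonneg.2 hΔ3; positivity)
  calc _ = |(vtilP * uhatP - v (y₀ + Δ / 2) * h (y₀ + Δ / 2)) / Δ -
        (vtilM * uhatM - v (y₀ - Δ / 2) * h (y₀ - Δ / 2)) / Δ + _| := by
          congr 1
          ring
    _ ≤ _ := (abs_add_le _ _).trans (add_le_add (abs_sub _ _) flux)
    _ ≤ C * (2 * M + C) * Δ ^ 2 + C * (2 * M + C) * Δ ^ 2 + M ^ 2 / 3 * Δ ^ 2 :=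
      add_le_add_left (add_le_add (reconstruction (hvb _) (hb _) hvP huP)
        (reconstruction (hvb _) (hb _) hvM huM)) _
    _ = (2 * C * (2 * M + C) + M ^ 2 / 3) * Δ ^ 2 := by ring

/-- (Quantitative content of Theorem 2.2 of the paper.) Let `M, C ≥ 0`.
There is a constant `K`, depending only on `M` and `C`, such that for all `Δ ∈ (0,1]`,
all `h : ℝ → ℝ` twice continuously differentiable with `|h|, |h'|, |h''| ≤ M`
(whose `Δ`-sliding average is `u`, so `u(y₀) = (1/Δ)∫_{y₀-Δ/2}^{y₀+Δ/2} h` and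
`u'(y₀) = (h(y₀+Δ/2) − h(y₀−Δ/2))/Δ`), all `v : ℝ → ℝ` thrice continuously
differentiable with `|v|, |v'|, |v''|, |v'''| ≤ M`, every `y₀`, and all reconstructed values
`û₊, û₋, ṽ₊, ṽ₋` that are `C·Δ³`-accurate approximations of the corresponding interface
values of `h` and `v`, the staggered flux difference satisfies
`|(ṽ₊û₊ − ṽ₋û₋)/Δ − (u'(y₀)v(y₀) + u(y₀)v'(y₀))| ≤ K·Δ²`. -/
theorem staggered_weno_second_order_limit (M C : ℝ) (hM : 0 ≤ M) (hC : 0 ≤ C) :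
    ∃ K : ℝ, ∀ (Δ : ℝ), 0 < Δ → Δ ≤ 1 →
      ∀ (h v : ℝ → ℝ), ContDiff ℝ 2 h →
        (∀ y, |h y| ≤ M) → (∀ y, |deriv h y| ≤ M) → (∀ y, |iteratedDeriv 2 h y| ≤ M) →
        ContDiff ℝ 3 v →
        (∀ y, |v y| ≤ M) → (∀ y, |deriv v y| ≤ M) →
        (∀ y, |iteratedDeriv 2 v y| ≤ M) → (∀ y, |iteratedDeriv 3 v y| ≤ M) →
        ∀ (y₀ uhatP uhatM vtilP vtilM : ℝ),
          |uhatP - h (y₀ + Δ / 2)| ≤ C * Δ ^ 3 →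
          |uhatM - h (y₀ - Δ / 2)| ≤ C * Δ ^ 3 →
          |vtilP - v (y₀ + Δ / 2)| ≤ C * Δ ^ 3 →
          |vtilM - v (y₀ - Δ / 2)| ≤ C * Δ ^ 3 →
          |(vtilP * uhatP - vtilM * uhatM) / Δ -
              ((h (y₀ + Δ / 2) - h (y₀ - Δ / 2)) / Δ * v y₀ +
                ((1 / Δ) * ∫ s in (y₀ - Δ / 2)..(y₀ + Δ / 2), h s) * deriv v y₀)| ≤
            K * Δ ^ 2 :=
  staggered_weno_second_order_limit_general M C
end

section
/- Let u, φ : ℝ → ℝ be three times continuously differentiable and fix x̄ ∈ ℝ. For Δ > 0 define the Wicker–Skamarock fourth-order flux F(x; Δ) = (u(x)/12)·[7(φ(x + Δ/2) + φ(x − Δ/2)) − (φ(x + 3Δ/2) + φ(x − 3Δ/2))]. Then, as Δ → 0⁺, (F(x̄ + Δ/2; Δ) − F(x̄ − Δ/2; Δ))/Δ = (u·φ)'(x̄) + O(Δ²); i.e., the function Δ ↦ (F(x̄ + Δ/2; Δ) − F(x̄ − Δ/2; Δ))/Δ − (u(x̄)φ(x̄))' is O(Δ²) in the limit Δ → 0⁺,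 where (u·φ)'(x̄) = u'(x̄)φ(x̄) + u(x̄)φ'(x̄). -/
/-!
The flux is even in its stencil width, so `F(x̄ - Δ/2; Δ) = g(-Δ)` for the centered flux
`g(s) = F(x̄ + s/2; s)`, and the flux difference is the central difference `g(Δ) - g(-Δ)` of a
`C³` function. The even Taylor terms cancel in a central difference, leaving
`2Δ g'(0) + O(Δ³)`, and differentiating the stencil gives `2 g'(0) = (uφ)'(x̄)`.
-/

open Asymptotics Filter Topology

theorem taylorWithinEval_three_add_sub_sub {E : Type*} [NormedAddCommGroup E]
    [NormedSpace ℝ E] (f : ℝ → E) (x h : ℝ) :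
    taylorWithinEval f 3 Set.univ x (x + h) - taylorWithinEval f 3 Set.univ x (x - h) =
      (2 * h) • deriv f x + (h ^ 3 / 3) • iteratedDeriv 3 f x := by
  simp only [taylor_within_apply, iteratedDerivWithin_univ, Finset.sum_range_succ,
    Finset.sum_range_zero, iteratedDeriv_zero, iteratedDeriv_one, Nat.factorial,
    add_sub_cancel_left, sub_sub_cancel_left]
  push_cast
  module

theorem ContDiff.isBigO_centralDifference {E : Type*} [NormedAddCommGroup E] [NormedSpace ℝ E]
    {f : ℝ → E} (hf : ContDiff ℝ 3 f) (x : ℝ) :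
    (fun h : ℝ => f (x + h) - f (x - h) - (2 * h) • deriv f x) =O[𝓝 0] (· ^ 3) := by
  have remainder := (taylor_isLittleO_univ (x₀ := x) (n := 3) hf).isBigO
  have right :
      (fun h : ℝ => f (x + h) - taylorWithinEval f 3 Set.univ x (x + h)) =O[𝓝 0] (· ^ 3) :=
    (remainder.comp_tendsto ((continuous_const_add x).tendsto' 0 x (add_zero x))).congr_right
      fun h => by simp
  have left :
      (fun h : ℝ => f (x - h) - taylorWithinEval f 3 Set.univ x (x - h)) =O[𝓝 0] (· ^ 3) :=
    isBigO_neg_right.mp <| (remainder.comp_tendsto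
      ((continuous_sub_left x).tendsto' 0 x (sub_zero x))).congr_right
        fun h => by simp only [Function.comp_apply]; ring
  have cubic : (fun h : ℝ => (h ^ 3 / 3) • iteratedDeriv 3 f x) =O[𝓝 0] (· ^ 3) :=
    (((isBigO_refl (· ^ 3) (𝓝 (0 : ℝ))).const_mul_left (1 / 3)).smul
      (isBigO_const_const (iteratedDeriv 3 f x) one_ne_zero (𝓝 (0 : ℝ)))).congr
        (fun h => by simp [div_eq_inv_mul]) (fun h => by simp)
  refine ((right.sub left).add cubic).congr_left fun h => ?_
  linear_combination (norm := module) (-1 : ℝ) • taylorWithinEval_three_add_sub_sub f x h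

theorem Asymptotics.IsBigO.div_id {l : Filter ℝ} {f : ℝ → ℝ} {n : ℕ}
    (h : f =O[l] (· ^ (n + 1))) : (fun x => f x / x) =O[l] (· ^ n) := by
  refine ((h.mul (isBigO_refl (·⁻¹) l)).trans (isBigO_of_le l fun x => ?_)).congr_left
    fun x => (div_eq_mul_inv _ _).symm
  rcases eq_or_ne x 0 with rfl | hx
  · simp
  · rw [pow_succ, mul_inv_cancel_right₀ hx]

theorem HasDerivAt.comp_const_add_mul_zero {f : ℝ → ℝ} {f' x : ℝ} (hf : HasDerivAt f f' x)
    (c : ℝ) : HasDerivAt (fun s => f (x + c * s)) (f' * c) 0 :=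
  (hf.comp_of_eq 0 (((hasDerivAt_id 0).const_mul c).const_add x) (by simp)).congr_deriv
    (by simp)

noncomputable def wickerSkamarockFlux (u φ : ℝ → ℝ) (x Δ : ℝ) : ℝ :=
  u x / 12 * (7 * (φ (x + Δ / 2) + φ (x - Δ / 2)) - (φ (x + 3 * Δ / 2) + φ (x - 3 * Δ / 2)))

theorem wickerSkamarockFlux_neg (u φ : ℝ → ℝ) (x Δ : ℝ) :
    wickerSkamarockFlux u φ x (-Δ) = wickerSkamarockFlux u φ x Δ := by
  simp only [wickerSkamarockFlux, neg_div, mul_neg, ← sub_eq_add_neg, sub_neg_eq_add]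
  ring

theorem ContDiff.wickerSkamarockFlux_centered {u φ : ℝ → ℝ} {n : WithTop ℕ∞}
    (hu : ContDiff ℝ n u) (hφ : ContDiff ℝ n φ) (x : ℝ) :
    ContDiff ℝ n fun s => wickerSkamarockFlux u φ (x + s / 2) s := by
  unfold wickerSkamarockFlux
  fun_prop

theorem hasDerivAt_wickerSkamarockFlux_centered {u φ : ℝ → ℝ} {x : ℝ}
    (hu : DifferentiableAt ℝ u x) (hφ : DifferentiableAt ℝ φ x) :
    HasDerivAt (fun s => wickerSkamarockFlux u φ (x + s / 2) s)
      ((deriv u x * φ x + u x * deriv φ x) / 2) 0 := by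
  have stencil : (fun s => wickerSkamarockFlux u φ (x + s / 2) s) = fun s =>
      u (x + 2⁻¹ * s) / 12 * (7 * (φ (x + 1 * s) + φ (x + 0 * s))
        - (φ (x + 2 * s) + φ (x + (-1) * s))) := by
    funext s
    simp only [wickerSkamarockFlux]
    ring_nf
  have hu' := hu.hasDerivAt.comp_const_add_mul_zero
  have hφ' := hφ.hasDerivAt.comp_const_add_mul_zero
  rw [stencil]
  refine (((hu' 2⁻¹).div_const 12).mul
    ((((hφ' 1).add (hφ' 0)).const_mul 7).sub ((hφ' 2).add (hφ' (-1))))).congr_deriv ?_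
  simp only [Pi.add_apply, Pi.sub_apply, one_mul, zero_mul, add_zero, mul_zero, mul_one,
    neg_mul, mul_neg, neg_zero]
  ring

/-- (Theorem A.1 of the paper.) Let `u, φ : ℝ → ℝ` be three times
continuously differentiable and fix `x₀ = x̄`. With the fourth-order Wicker–Skamarock flux
`F(x; Δ) = (u(x)/12)·[7(φ(x+Δ/2) + φ(x−Δ/2)) − (φ(x+3Δ/2) + φ(x−3Δ/2))]`, as `Δ → 0⁺`
the flux difference `(F(x̄+Δ/2; Δ) − F(x̄−Δ/2; Δ))/Δ` equals `(uφ)'(x̄) + O(Δ²)`. -/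
theorem wicker_skamarock_second_order (u φ : ℝ → ℝ)
    (hu : ContDiff ℝ 3 u) (hφ : ContDiff ℝ 3 φ) (x₀ : ℝ)
    (F : ℝ → ℝ → ℝ)
    (hF : ∀ x Δ, F x Δ = u x / 12 *
      (7 * (φ (x + Δ / 2) + φ (x - Δ / 2)) - (φ (x + 3 * Δ / 2) + φ (x - 3 * Δ / 2)))) :
    (fun Δ : ℝ => (F (x₀ + Δ / 2) Δ - F (x₀ - Δ / 2) Δ) / Δ -
        (deriv u x₀ * φ x₀ + u x₀ * deriv φ x₀)) =O[nhdsWithin 0 (Set.Ioi 0)]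
      (fun Δ : ℝ => Δ ^ 2) := by
  obtain rfl : F = wickerSkamarockFlux u φ := funext₂ hF
  have slope := (hasDerivAt_wickerSkamarockFlux_centered (hu.differentiable (by norm_num) x₀)
    (hφ.differentiable (by norm_num) x₀)).deriv
  have central := (hu.wickerSkamarockFlux_centered hφ x₀).isBigO_centralDifference 0
  refine (central.div_id.mono nhdsWithin_le_nhds).congr' ?_ EventuallyEq.rfl
  filter_upwards [self_mem_nhdsWithin] with Δ (hΔ : 0 < Δ)
  rw [slope, ← wickerSkamarockFlux_neg u φ (x₀ - Δ / 2)]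
  field_simp
  ring_nf
end

section
/- Let φ : ℝ → ℝ be seven times continuously differentiable and fix x ∈ ℝ. For Δ > 0 define Q(y; Δ) = (1/12)·[7(φ(y + Δ/2) + φ(y − Δ/2)) − (φ(y + 3Δ/2) + φ(y − 3Δ/2))]. Then, as Δ → 0⁺, Q(x + Δ/2; Δ) − Q(x − Δ/2; Δ) = Δ·φ'(x) − (Δ⁵/30)·φ⁽⁵⁾(x) + O(Δ⁷). -/
open Asymptotics

section Helpers
open Set

-- step 1: iterated derivative of affine composition
lemma iterDeriv_affine (φ : ℝ → ℝ) (hφ : ContDiff ℝ 7 φ) (x c : ℝ) :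
    ∀ n : ℕ, n ≤ 7 → iteratedDeriv n (fun t => φ (x + c * t))
      = fun t => c ^ n * iteratedDeriv n φ (x + c * t) := by
  intro n
  induction n with
  | zero => intro _; simp [iteratedDeriv_zero]
  | succ n ih =>
    intro hn
    have hn' : n ≤ 7 := by omega
    rw [iteratedDeriv_succ, ih hn']
    funext t
    have hg : Differentiable ℝ (iteratedDeriv n φ) :=
      hφ.differentiable_iteratedDeriv n (by exact_mod_cast (by omega : n < 7))
    have hinner : HasDerivAt (fun t : ℝ => x + c * t) c t := by
      simpa using ((hasDerivAt_id t).const_mul c).const_add x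
    have H : HasDerivAt (fun t => c ^ n * iteratedDeriv n φ (x + c * t))
        (c ^ n * (deriv (iteratedDeriv n φ) (x + c * t) * c)) t :=
      (((hg (x + c * t)).hasDerivAt.comp t hinner)).const_mul (c ^ n)
    rw [H.deriv, ← iteratedDeriv_succ]
    ring

lemma iDW_eq (f : ℝ → ℝ) (hf : ContDiff ℝ 7 f) {s : Set ℝ} (hs : UniqueDiffOn ℝ s)
    {y : ℝ} (hy : y ∈ s) (m : ℕ) (hm : m ≤ 7) :
    iteratedDerivWithin m f s y = iteratedDeriv m f y := by
  have h1 := ((hf.contDiffOn (s := Set.univ)).ftaylorSeriesWithin uniqueDiffOn_univ).mono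
    (Set.subset_univ s)
  have h2 := h1.eq_iteratedFDerivWithin_of_uniqueDiffOn (by exact_mod_cast hm) hs hy
  rw [iteratedDerivWithin_eq_iteratedFDerivWithin, iteratedDeriv_eq_iteratedFDeriv, ← h2]
  simp [ftaylorSeriesWithin, iteratedFDerivWithin_univ]

-- step 2: Taylor big-O bound
lemma taylor_bigO (φ : ℝ → ℝ) (hφ : ContDiff ℝ 7 φ) (x c : ℝ) :
    (fun Δ : ℝ => φ (x + c * Δ) -
        ∑ k ∈ Finset.range 7, c ^ k * iteratedDeriv k φ x * Δ ^ k / (Nat.factorial k))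
      =O[nhdsWithin 0 (Set.Ioi 0)] (fun Δ : ℝ => Δ ^ 7) := by
  set ψ : ℝ → ℝ := fun t => φ (x + c * t) with hψdef
  have hψ : ContDiff ℝ 7 ψ := hφ.comp (contDiff_const.add (contDiff_const.mul contDiff_id))
  set s : Set ℝ := Icc (0:ℝ) 1 with hs
  have hus : UniqueDiffOn ℝ s := uniqueDiffOn_Icc one_pos
  obtain ⟨C, hC⟩ := (isCompact_Icc (a := (0:ℝ)) (b := 1)).exists_bound_of_continuousOn
    ((hψ.contDiffOn.continuousOn_iteratedDerivWithin (m := 7) le_rfl hus))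
  have hrem : ∀ Δ ∈ Icc (0:ℝ) 1,
      ‖ψ Δ - taylorWithinEval ψ 6 s 0 Δ‖ ≤ C * (Δ - 0) ^ 7 / (Nat.factorial 6) := by
    intro Δ hΔ
    exact taylor_mean_remainder_bound (by norm_num) (hψ.contDiffOn) hΔ hC
  have htay : ∀ Δ : ℝ, taylorWithinEval ψ 6 s 0 Δ
      = ∑ k ∈ Finset.range 7, c ^ k * iteratedDeriv k φ x * Δ ^ k / (Nat.factorial k) := by
    intro Δ
    rw [taylor_within_apply]
    refine Finset.sum_congr rfl fun k hk => ?_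
    have hk7 : k ≤ 7 := by
      simp only [Finset.mem_range] at hk; omega
    rw [iDW_eq ψ hψ hus (by constructor <;> norm_num) k hk7,
      iterDeriv_affine φ hφ x c k hk7]
    simp only [mul_zero, add_zero, smul_eq_mul, sub_zero]
    ring
  rw [isBigO_iff]
  refine ⟨C / (Nat.factorial 6), ?_⟩
  filter_upwards [Ioo_mem_nhdsGT_of_mem (by norm_num : (0:ℝ) ∈ Ico (0:ℝ) 1)] with Δ hΔ
  have hΔ' : Δ ∈ Icc (0:ℝ) 1 := ⟨hΔ.1.le, hΔ.2.le⟩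
  have := hrem Δ hΔ'
  rw [htay Δ] at this
  have h7 : ‖Δ ^ 7‖ = Δ ^ 7 := by
    rw [Real.norm_eq_abs, abs_of_nonneg (pow_nonneg hΔ.1.le 7)]
  calc ‖φ (x + c * Δ) - ∑ k ∈ Finset.range 7, c ^ k * iteratedDeriv k φ x * Δ ^ k / (Nat.factorial k)‖
      ≤ C * (Δ - 0) ^ 7 / (Nat.factorial 6) := this
    _ = C / (Nat.factorial 6) * ‖Δ ^ 7‖ := by rw [h7]; ring


end Helpers

/-- (First intermediate Taylor expansion in the proof of Theorem A.1.)
Let `φ : ℝ → ℝ` be seven times continuously differentiable and fix `x`. With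
`Q(y; Δ) = (1/12)·[7(φ(y+Δ/2) + φ(y−Δ/2)) − (φ(y+3Δ/2) + φ(y−3Δ/2))]`, as `Δ → 0⁺`,
`Q(x+Δ/2; Δ) − Q(x−Δ/2; Δ) = Δ·φ'(x) − (Δ⁵/30)·φ⁽⁵⁾(x) + O(Δ⁷)`. -/
theorem wicker_skamarock_Q_difference_expansion (φ : ℝ → ℝ)
    (hφ : ContDiff ℝ 7 φ) (x : ℝ)
    (Q : ℝ → ℝ → ℝ)
    (hQ : ∀ y Δ, Q y Δ = (1 / 12) *
      (7 * (φ (y + Δ / 2) + φ (y - Δ / 2)) - (φ (y + 3 * Δ / 2) + φ (y - 3 * Δ / 2)))) :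
    (fun Δ : ℝ => Q (x + Δ / 2) Δ - Q (x - Δ / 2) Δ -
        (Δ * deriv φ x - Δ ^ 5 / 30 * iteratedDeriv 5 φ x))
      =O[nhdsWithin 0 (Set.Ioi 0)] (fun Δ : ℝ => Δ ^ 7) := by

  set E : ℝ → ℝ → ℝ := fun c Δ => φ (x + c * Δ) -
      ∑ k ∈ Finset.range 7, c ^ k * iteratedDeriv k φ x * Δ ^ k / (Nat.factorial k) with hE
  have key : ∀ Δ : ℝ, Q (x + Δ / 2) Δ - Q (x - Δ / 2) Δ -
      (Δ * deriv φ x - Δ ^ 5 / 30 * iteratedDeriv 5 φ x)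
      = (1 / 12) * (8 * (E 1 Δ - E (-1) Δ) - (E 2 Δ - E (-2) Δ)) := by
    intro Δ
    have e1 : x + Δ / 2 + Δ / 2 = x + 1 * Δ := by ring
    have e2 : x + Δ / 2 - Δ / 2 = x := by ring
    have e3 : x + Δ / 2 + 3 * Δ / 2 = x + 2 * Δ := by ring
    have e4 : x + Δ / 2 - 3 * Δ / 2 = x + (-1) * Δ := by ring
    have e5 : x - Δ / 2 + Δ / 2 = x := by ring
    have e6 : x - Δ / 2 - Δ / 2 = x + (-1) * Δ := by ring
    have e7 : x - Δ / 2 + 3 * Δ / 2 = x + 1 * Δ := by ring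
    have e8 : x - Δ / 2 - 3 * Δ / 2 = x + (-2) * Δ := by ring
    rw [hQ, hQ, e1, e2, e3, e4, e5, e6, e7, e8, hE, ← iteratedDeriv_one]
    simp only [Finset.sum_range_succ, Finset.sum_range_zero]
    norm_num [Nat.factorial]
    ring
  have h1 := taylor_bigO φ hφ x 1
  have hm1 := taylor_bigO φ hφ x (-1)
  have h2 := taylor_bigO φ hφ x 2
  have hm2 := taylor_bigO φ hφ x (-2)
  have hcomb := (((h1.sub hm1).const_mul_left 8).sub (h2.sub hm2)).const_mul_left (1/12 : ℝ)
  have heq : (fun Δ : ℝ => Q (x + Δ / 2) Δ - Q (x - Δ / 2) Δ -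
      (Δ * deriv φ x - Δ ^ 5 / 30 * iteratedDeriv 5 φ x))
      = fun Δ : ℝ => (1 / 12) * (8 * (E 1 Δ - E (-1) Δ) - (E 2 Δ - E (-2) Δ)) := funext key
  rw [heq]
  exact hcomb
end

section
/- Let Δ > 0, y ∈ ℝ, and let v : ℝ → ℝ be three times continuously differentiable with |v'''(s)| ≤ M for all s ∈ [y − Δ/2, y + Δ/2]. Then for all A, B ∈ ℝ: |((v(y + Δ/2) − v(y))/Δ)·A + ((v(y) − v(y − Δ/2))/Δ)·B − v'(y)·(A + B)/2 − v''(y)·Δ·(A − B)/8| ≤ (M·Δ²/48)·(|A| + |B|). -/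
/-!
Expand `v` to second order about `y` with the Lagrange remainder, once towards `y + Δ/2` and once
towards `y - Δ/2`. The constant, first- and second-order terms of the two difference quotients
combine into exactly `v'(y)·(A+B)/2 + v''(y)·Δ·(A-B)/8`, so the defect is `(Rp·A - Rm·B)/Δ`, where
each remainder is bounded by `M·(Δ/2)³/6`.
-/

open Set Nat

lemma taylorWithinEval_eq_sum_iteratedDeriv {f : ℝ → ℝ} {n : ℕ} {s : Set ℝ} {x₀ : ℝ}
    (hs : UniqueDiffOn ℝ s) (hx₀ : x₀ ∈ s) (hf : ContDiffAt ℝ n f x₀) (x : ℝ) :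
    taylorWithinEval f n s x₀ x =
      ∑ k ∈ Finset.range (n + 1), (k ! : ℝ)⁻¹ * (x - x₀) ^ k * iteratedDeriv k f x₀ := by
  rw [taylor_within_apply]
  refine Finset.sum_congr rfl fun k hk => ?_
  have hkn : (k : ℕ∞) ≤ n := by exact_mod_cast Finset.mem_range_succ_iff.mp hk
  rw [smul_eq_mul, iteratedDerivWithin_eq_iteratedDeriv hs (hf.of_le (by exact_mod_cast hkn)) hx₀]

lemma abs_sub_taylor_two_le {f : ℝ → ℝ} (hf : ContDiff ℝ 3 f) {y h M : ℝ}
    (hM : ∀ s ∈ uIcc y (y + h), |iteratedDeriv 3 f s| ≤ M) :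
    |f (y + h) - f y - deriv f y * h - iteratedDeriv 2 f y * h ^ 2 / 2| ≤ M * |h| ^ 3 / 6 := by
  rcases eq_or_ne h 0 with rfl | hh
  · simp
  have hne : y ≠ y + h := fun e => hh (by linarith)
  obtain ⟨x', hx', hrem⟩ :=
    taylor_mean_remainder_lagrange_iteratedDeriv (n := 2) hne hf.contDiffOn
  rw [taylorWithinEval_eq_sum_iteratedDeriv (uniqueDiffOn_uIcc hne) left_mem_uIcc
    (hf.contDiffAt.of_le (by norm_num))] at hrem
  have hremainder : f (y + h) - f y - deriv f y * h - iteratedDeriv 2 f y * h ^ 2 / 2 =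
      iteratedDeriv 3 f x' * h ^ 3 / 6 := by
    simp only [Finset.sum_range_succ, Finset.sum_range_zero, iteratedDeriv_zero,
      iteratedDeriv_one, add_sub_cancel_left] at hrem
    norm_num [Nat.factorial] at hrem
    linarith
  rw [hremainder, abs_div, abs_mul, abs_pow, abs_of_pos (by norm_num : (0 : ℝ) < 6)]
  gcongr
  exact hM x' (uIoo_subset_uIcc_self hx')

/-- (Key Taylor-expansion identity in the proof of Theorem 2.2.) Let
`Δ > 0`, `y ∈ ℝ`, and let `v : ℝ → ℝ` be three times continuously differentiable with
`|v'''(s)| ≤ M` for all `s ∈ [y − Δ/2, y + Δ/2]`. Then for all `A, B ∈ ℝ`: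
`|((v(y+Δ/2) − v(y))/Δ)·A + ((v(y) − v(y−Δ/2))/Δ)·B − v'(y)·(A+B)/2 − v''(y)·Δ·(A−B)/8|`
`≤ (M·Δ²/48)·(|A| + |B|)`. -/
theorem staggered_taylor_identity (Δ : ℝ) (hΔ : 0 < Δ) (y M : ℝ) (v : ℝ → ℝ)
    (hv : ContDiff ℝ 3 v)
    (hM : ∀ s ∈ Set.Icc (y - Δ / 2) (y + Δ / 2), |iteratedDeriv 3 v s| ≤ M) :
    ∀ A B : ℝ,
      |((v (y + Δ / 2) - v y) / Δ) * A + ((v y - v (y - Δ / 2)) / Δ) * B -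
          deriv v y * (A + B) / 2 - iteratedDeriv 2 v y * Δ * (A - B) / 8| ≤
        M * Δ ^ 2 / 48 * (|A| + |B|) := by
  intro A B
  have hy : y ∈ Icc (y - Δ / 2) (y + Δ / 2) := ⟨by linarith, by linarith⟩
  have hRight := abs_sub_taylor_two_le hv (h := Δ / 2)
    fun s hs => hM s (uIcc_subset_Icc hy (right_mem_Icc.mpr (by linarith)) hs)
  have hLeft := abs_sub_taylor_two_le hv (h := -(Δ / 2))
    fun s hs => hM s <| uIcc_subset_Icc hy (left_mem_Icc.mpr (by linarith)) <| by
      simpa [← sub_eq_add_neg] using hs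
  rw [abs_of_pos (half_pos hΔ)] at hRight
  rw [abs_neg, abs_of_pos (half_pos hΔ)] at hLeft
  set Rp := v (y + Δ / 2) - v y - deriv v y * (Δ / 2) - iteratedDeriv 2 v y * (Δ / 2) ^ 2 / 2
  set Rm :=
    v (y + -(Δ / 2)) - v y - deriv v y * -(Δ / 2) - iteratedDeriv 2 v y * (-(Δ / 2)) ^ 2 / 2
  calc _ = |(Rp * A - Rm * B) / Δ| := by
        congr 1
        simp only [Rp, Rm, ← sub_eq_add_neg]
        field_simp
        ring
    _ = |Rp * A - Rm * B| / Δ := by rw [abs_div, abs_of_pos hΔ]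
    _ ≤ (|Rp| * |A| + |Rm| * |B|) / Δ := by
        rw [← abs_mul, ← abs_mul]
        gcongr
        exact abs_sub _ _
    _ ≤ (M * (Δ / 2) ^ 3 / 6 * |A| + M * (Δ / 2) ^ 3 / 6 * |B|) / Δ := by gcongr
    _ = M * Δ ^ 2 / 48 * (|A| + |B|) := by field_simp; ring
end

section
/- Let Δ ∈ (0, 1], q ≥ 1 a real number, x₀ ∈ ℝ, and let h : ℝ → ℝ be continuous with Δ-sliding average φ, so that φ'(x₀) = (h(x₀ + Δ/2) − h(x₀ − Δ/2))/Δ. Let a ∈ ℝ and suppose ũ, φ̂₊, φ̂₋ ∈ ℝ satisfy |ũ − a| ≤ C₁·Δ^q, |φ̂₊ − h(x₀ + Δ/2)| ≤ C₂·Δ^q, and |φ̂₋ − h(x₀ − Δ/2)| ≤ C₂·Δ^q. Then |ũ·(φ̂₊ − φ̂₋)/Δ − a·φ'(x₀)| ≤ (2C₂·(|a| + C₁) + C₁·|φ'(x₀)|)·Δ^{q−1}. -/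
/-!
By the fundamental theorem of calculus the sliding average is a difference of two values of an
antiderivative of `h`, so `φ'(x₀)` is exactly the difference quotient of `h` across the cell.
The error of the scheme then splits as `ũ · (error of the difference quotient) + (ũ - a) · φ'(x₀)`:
the first term is `O(Δ^q / Δ)`, the second `O(Δ^q)`, which is `O(Δ^(q-1))` because `Δ ≤ 1`.
-/

open intervalIntegral

theorem hasDerivAt_slidingAverage {h : ℝ → ℝ} (hh : Continuous h) (Δ x : ℝ) :
    HasDerivAt (slidingAverage Δ h) ((h (x + Δ / 2) - h (x - Δ / 2)) / Δ) x := by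
  set F : ℝ → ℝ := fun y => ∫ s in (0 : ℝ)..y, h s
  have hF : ∀ y, HasDerivAt F (h y) y := fun y => (hh.integral_hasStrictDerivAt 0 y).hasDerivAt
  have hdiff : slidingAverage Δ h = fun y => (1 / Δ) * (F (y + Δ / 2) - F (y - Δ / 2)) := by
    funext y
    rw [slidingAverage, integral_interval_sub_left (hh.intervalIntegrable _ _)
      (hh.intervalIntegrable _ _)]
  rw [hdiff, ← one_div_mul_eq_div _ (h _ - h _)]
  exact ((hF _).comp_add_const x _ |>.sub ((hF _).comp_sub_const x _)).const_mul _

theorem abs_sub_div_sub_le {p m A B ε Δ : ℝ} (hΔ : 0 < Δ) (hp : |p - A| ≤ ε) (hm : |m - B| ≤ ε) :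
    |(p - m) / Δ - (A - B) / Δ| ≤ 2 * ε / Δ := by
  rw [← sub_div, abs_div, abs_of_pos hΔ]
  gcongr
  calc |p - m - (A - B)| = |(p - A) - (m - B)| := by ring_nf
    _ ≤ |p - A| + |m - B| := abs_sub _ _
    _ ≤ 2 * ε := by linarith

theorem abs_mul_sub_mul_le_of_abs_sub_le {u a x y ε δ : ℝ} (hu : |u - a| ≤ ε) (hx : |x - y| ≤ δ) :
    |u * x - a * y| ≤ (|a| + ε) * δ + ε * |y| := by
  have hu' : |u| ≤ |a| + ε := by linarith [abs_sub_abs_le_abs_sub u a]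
  calc |u * x - a * y| = |u * (x - y) + (u - a) * y| := by ring_nf
    _ ≤ |u| * |x - y| + |u - a| * |y| := by
        rw [← abs_mul, ← abs_mul]; exact abs_add_le _ _
    _ ≤ (|a| + ε) * δ + ε * |y| :=
        add_le_add (mul_le_mul hu' hx (abs_nonneg _) ((abs_nonneg _).trans hu'))
          (mul_le_mul_of_nonneg_right hu (abs_nonneg _))

/-- (Accuracy of the non-conservative scalar scheme, Algorithm 6.) Let
`Δ ∈ (0,1]`, `q ≥ 1` real, `x₀ ∈ ℝ`, and let `h : ℝ → ℝ` be continuous with `Δ`-sliding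
average `φ`, so that `φ'(x₀) = (h(x₀+Δ/2) − h(x₀−Δ/2))/Δ`. If `|ũ − a| ≤ C₁ Δ^q`,
`|φ̂₊ − h(x₀+Δ/2)| ≤ C₂ Δ^q` and `|φ̂₋ − h(x₀−Δ/2)| ≤ C₂ Δ^q`, then
`|ũ·(φ̂₊ − φ̂₋)/Δ − a·φ'(x₀)| ≤ (2C₂(|a| + C₁) + C₁|φ'(x₀)|)·Δ^(q−1)`. -/
theorem scalar_scheme_accuracy (Δ : ℝ) (hΔ : 0 < Δ) (hΔ1 : Δ ≤ 1) (q : ℝ) (hq : 1 ≤ q)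
    (x₀ : ℝ) (h : ℝ → ℝ) (hh : Continuous h)
    (φ : ℝ → ℝ) (hφ : ∀ x, φ x = (1 / Δ) * ∫ s in (x - Δ / 2)..(x + Δ / 2), h s)
    (a C₁ C₂ ut φp φm : ℝ)
    (hut : |ut - a| ≤ C₁ * Δ ^ q)
    (hφp : |φp - h (x₀ + Δ / 2)| ≤ C₂ * Δ ^ q)
    (hφm : |φm - h (x₀ - Δ / 2)| ≤ C₂ * Δ ^ q) :
    deriv φ x₀ = (h (x₀ + Δ / 2) - h (x₀ - Δ / 2)) / Δ ∧
      |ut * (φp - φm) / Δ - a * deriv φ x₀| ≤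
        (2 * C₂ * (|a| + C₁) + C₁ * |deriv φ x₀|) * Δ ^ (q - 1) := by
  have hderiv : deriv φ x₀ = (h (x₀ + Δ / 2) - h (x₀ - Δ / 2)) / Δ := by
    rw [show φ = slidingAverage Δ h from funext hφ]
    exact (hasDerivAt_slidingAverage hh Δ x₀).deriv
  refine ⟨hderiv, ?_⟩
  have hΔq : 0 < Δ ^ q := Real.rpow_pos_of_pos hΔ q
  have hC₁ : 0 ≤ C₁ := nonneg_of_mul_nonneg_left ((abs_nonneg _).trans hut) hΔq
  have hC₂ : 0 ≤ C₂ := nonneg_of_mul_nonneg_left ((abs_nonneg _).trans hφp) hΔq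
  have hΔq_le_one : Δ ^ q ≤ 1 := Real.rpow_le_one hΔ.le hΔ1 (by linarith)
  have hΔq_le : Δ ^ q ≤ Δ ^ (q - 1) := Real.rpow_le_rpow_of_exponent_ge hΔ hΔ1 (by linarith)
  have hquot : |(φp - φm) / Δ - deriv φ x₀| ≤ 2 * C₂ * Δ ^ (q - 1) := by
    rw [hderiv, Real.rpow_sub_one hΔ.ne', ← mul_div_assoc, mul_assoc]
    exact abs_sub_div_sub_le hΔ hφp hφm
  rw [mul_div_assoc]
  calc |ut * ((φp - φm) / Δ) - a * deriv φ x₀|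
      ≤ (|a| + C₁ * Δ ^ q) * (2 * C₂ * Δ ^ (q - 1)) + C₁ * Δ ^ q * |deriv φ x₀| :=
        abs_mul_sub_mul_le_of_abs_sub_le hut hquot
    _ ≤ (|a| + C₁ * 1) * (2 * C₂ * Δ ^ (q - 1)) + C₁ * Δ ^ (q - 1) * |deriv φ x₀| := by gcongr
    _ = (2 * C₂ * (|a| + C₁) + C₁ * |deriv φ x₀|) * Δ ^ (q - 1) := by ring
end
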